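/- arXiv:2004.11770 — 2 statements merged into one kernel-verified Lean document; each statement's English description precedes it below -/
import Mathlib

section
/- For all copulas C₁, C₂ on [0,1]^d, √d / 3 ≤ S(C₁,C₂) ≤ √(d/6), where S(C₁,C₂) = ∫∫ ‖x−y‖₂ C₁(dx) C₂(dy), and the lower bound equals S(C⁺,C⁺) for C⁺ the law of (U,…,U) with U uniform on [0,1]. -/
open MeasureTheory Set

/-- The Euclidean distance `‖x - y‖₂` on `ℝ^d`. -/
noncomputable def dist2 {d : ℕ} (x y : Fin d → ℝ) : ℝ := Real.sqrt (∑ i, (x i - y i) ^ 2)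

/-- `S(F,G) = ∫∫ ‖x-y‖₂ F(dx) G(dy)`. -/
noncomputable def S (d : ℕ) (F G : Measure (Fin d → ℝ)) : ℝ :=
  ∫ x, ∫ y, dist2 x y ∂G ∂F

/-- The uniform (Lebesgue) measure on `[0,1]`. -/
noncomputable def uniform01 : Measure ℝ := volume.restrict (Set.Icc 0 1)

/-- A copula: a probability measure on `[0,1]^d` whose one-dimensional coordinate
marginals all equal the uniform measure on `[0,1]`. -/
def IsCopula (d : ℕ) (C : Measure (Fin d → ℝ)) : Prop :=
  IsProbabilityMeasure C ∧ ∀ i : Fin d, Measure.map (fun x => x i) C = uniform01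

/-- The upper Fréchet (comonotone) copula `C⁺`: the law of `(U,…,U)` for `U` uniform on `[0,1]`. -/
noncomputable def CPlus (d : ℕ) : Measure (Fin d → ℝ) :=
  Measure.map (fun u : ℝ => fun _ : Fin d => u) uniform01

/-! ### Auxiliary lemmas -/

instance : IsProbabilityMeasure uniform01 :=
  ⟨by simp [uniform01, Real.volume_Icc]⟩

lemma integral_uniform01 (f : ℝ → ℝ) : ∫ u, f u ∂uniform01 = ∫ u in (0:ℝ)..1, f u := by
  rw [uniform01, MeasureTheory.integral_Icc_eq_integral_Ioc,
    intervalIntegral.integral_of_le (zero_le_one)]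

lemma prod_uniform_eq : uniform01.prod uniform01
    = (volume : Measure (ℝ × ℝ)).restrict (Icc (0:ℝ) 1 ×ˢ Icc (0:ℝ) 1) := by
  rw [uniform01, Measure.prod_restrict, ← Measure.volume_eq_prod]

lemma integrable_uniform_prod {f : ℝ × ℝ → ℝ} (hf : Continuous f) :
    Integrable f (uniform01.prod uniform01) := by
  rw [prod_uniform_eq]
  exact hf.continuousOn.integrableOn_compact (isCompact_Icc.prod isCompact_Icc)

lemma inner_abs (u : ℝ) (hu : u ∈ Icc (0:ℝ) 1) :
    ∫ v in (0:ℝ)..1, |u - v| = u ^ 2 - u + 1 / 2 := by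
  have h := intervalIntegral.integral_comp_sub_left (a := (0:ℝ)) (b := 1) (fun w => |w|) u
  rw [h, sub_zero]
  have hi1 : IntervalIntegrable (fun w : ℝ => |w|) volume (u - 1) 0 :=
    (continuous_abs).intervalIntegrable _ _
  have hi2 : IntervalIntegrable (fun w : ℝ => |w|) volume 0 u :=
    (continuous_abs).intervalIntegrable _ _
  rw [← intervalIntegral.integral_add_adjacent_intervals hi1 hi2]
  have e1 : ∫ w in (u-1)..0, |w| = ∫ w in (u-1)..0, -w := by
    apply intervalIntegral.integral_congr
    intro w hw
    rw [uIcc_of_le (by linarith [hu.2])] at hw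
    exact abs_of_nonpos hw.2
  have e2 : ∫ w in (0:ℝ)..u, |w| = ∫ w in (0:ℝ)..u, w := by
    apply intervalIntegral.integral_congr
    intro w hw
    rw [uIcc_of_le hu.1] at hw
    exact abs_of_nonneg hw.1
  rw [e1, e2, intervalIntegral.integral_neg, integral_id, integral_id]
  ring

lemma inner_sq (u : ℝ) :
    ∫ v in (0:ℝ)..1, (u - v) ^ 2 = u ^ 2 - u + 1 / 3 := by
  have h := intervalIntegral.integral_comp_sub_left (a := (0:ℝ)) (b := 1) (fun w => w ^ 2) u
  rw [h, integral_pow]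
  ring

lemma outer_poly (c : ℝ) : ∫ u in (0:ℝ)..1, (u ^ 2 - u + c) = 1 / 3 - 1 / 2 + c := by
  rw [intervalIntegral.integral_add ((intervalIntegral.intervalIntegrable_pow 2).sub intervalIntegral.intervalIntegrable_id)
      (intervalIntegrable_const),
    intervalIntegral.integral_sub (intervalIntegral.intervalIntegrable_pow 2) intervalIntegral.intervalIntegrable_id,
    integral_pow, integral_id, intervalIntegral.integral_const]
  norm_num

lemma abs_int : ∫ p : ℝ × ℝ, |p.1 - p.2| ∂(uniform01.prod uniform01) = 1 / 3 := by
  rw [MeasureTheory.integral_prod _ (integrable_uniform_prod (by fun_prop))]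
  have h1 : ∫ u, (∫ v, |u - v| ∂uniform01) ∂uniform01
      = ∫ u, (u ^ 2 - u + 1 / 2) ∂uniform01 := by
    rw [uniform01]
    apply setIntegral_congr_fun measurableSet_Icc
    intro u hu
    show ∫ v, |u - v| ∂uniform01 = _
    rw [integral_uniform01, inner_abs u hu]
  rw [h1, integral_uniform01, outer_poly]
  norm_num

lemma sq_int : ∫ p : ℝ × ℝ, (p.1 - p.2) ^ 2 ∂(uniform01.prod uniform01) = 1 / 6 := by
  rw [MeasureTheory.integral_prod _ (integrable_uniform_prod (by fun_prop))]
  have h1 : ∫ u, (∫ v, (u - v) ^ 2 ∂uniform01) ∂uniform01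
      = ∫ u, (u ^ 2 - u + 1 / 3) ∂uniform01 := by
    rw [uniform01]
    apply setIntegral_congr_fun measurableSet_Icc
    intro u _
    show ∫ v, (u - v) ^ 2 ∂uniform01 = _
    rw [integral_uniform01, inner_sq u]
  rw [h1, integral_uniform01, outer_poly]
  norm_num

lemma jensen_sqrt {α : Type*} [MeasurableSpace α] (μ : Measure α) [IsProbabilityMeasure μ]
    (f : α → ℝ) (hf : Integrable f μ) (h0 : 0 ≤ᵐ[μ] f)
    (hsf : Integrable (fun x => Real.sqrt (f x)) μ) :
    ∫ x, Real.sqrt (f x) ∂μ ≤ Real.sqrt (∫ x, f x ∂μ) := by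
  set m := ∫ x, f x ∂μ with hm
  have hm0 : 0 ≤ m := integral_nonneg_of_ae h0
  rcases hm0.eq_or_lt with h | h
  · have hf0 : f =ᵐ[μ] 0 := (integral_eq_zero_iff_of_nonneg_ae h0 hf).1 h.symm
    have : (fun x => Real.sqrt (f x)) =ᵐ[μ] 0 := by
      filter_upwards [hf0] with x hx
      simp [hx]
    rw [integral_congr_ae this]
    simp [← h]
  · have hsm : 0 < Real.sqrt m := Real.sqrt_pos.2 h
    have key : ∀ᵐ x ∂μ, Real.sqrt (f x) ≤ (f x + m) / (2 * Real.sqrt m) := by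
      filter_upwards [h0] with x hx
      have h1 : 0 ≤ Real.sqrt (f x) := Real.sqrt_nonneg _
      have h2 : Real.sqrt (f x) ^ 2 = f x := Real.sq_sqrt hx
      have h3 : Real.sqrt m ^ 2 = m := Real.sq_sqrt hm0
      rw [le_div_iff₀ (by positivity)]
      nlinarith [sq_nonneg (Real.sqrt (f x) - Real.sqrt m)]
    calc ∫ x, Real.sqrt (f x) ∂μ ≤ ∫ x, (f x + m) / (2 * Real.sqrt m) ∂μ := by
          apply integral_mono_ae hsf _ key
          exact (hf.add (integrable_const m)).div_const _
      _ = (m + m) / (2 * Real.sqrt m) := by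
          rw [integral_div, integral_add hf (integrable_const m), integral_const]
          simp [hm]
      _ = Real.sqrt m := by
          rw [show m + m = 2 * m by ring, mul_div_mul_left _ _ (two_ne_zero), hm,
            Real.div_sqrt]

lemma copula_ae_box {d : ℕ} {C : Measure (Fin d → ℝ)} (h : IsCopula d C) :
    ∀ᵐ x ∂C, ∀ i, x i ∈ Icc (0:ℝ) 1 := by
  rw [ae_all_iff]
  intro i
  have hm : Measurable fun x : Fin d → ℝ => x i := measurable_pi_apply i
  have h0 : Measure.map (fun x => x i) C (Icc (0:ℝ) 1)ᶜ = 0 := by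
    rw [h.2 i, uniform01, Measure.restrict_apply measurableSet_Icc.compl]
    simp
  rw [Measure.map_apply hm measurableSet_Icc.compl] at h0
  rw [ae_iff]
  exact h0

lemma continuous_dist2 {d : ℕ} :
    Continuous (fun z : (Fin d → ℝ) × (Fin d → ℝ) => dist2 z.1 z.2) := by
  unfold dist2
  fun_prop

/-- The main marginal-transfer lemma. -/
lemma marg_integral {d : ℕ} {C1 C2 : Measure (Fin d → ℝ)}
    (h1 : IsCopula d C1) (h2 : IsCopula d C2) (i : Fin d) (g : ℝ × ℝ → ℝ)
    (hg : Continuous g) :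
    ∫ z : (Fin d → ℝ) × (Fin d → ℝ), g (z.1 i, z.2 i) ∂(C1.prod C2)
      = ∫ p, g p ∂(uniform01.prod uniform01) := by
  haveI := h1.1; haveI := h2.1
  have hm : Measurable fun x : Fin d → ℝ => x i := measurable_pi_apply i
  have hmap : (C1.prod C2).map
      (Prod.map (fun x : Fin d → ℝ => x i) (fun x : Fin d → ℝ => x i))
      = uniform01.prod uniform01 := by
    rw [← Measure.map_prod_map _ _ hm hm, h1.2 i, h2.2 i]
  rw [← hmap, integral_map (hm.prodMap hm).aemeasurable hg.aestronglyMeasurable]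
  rfl

/-- for all copulas `C₁, C₂`, `√d/3 ≤ S(C₁,C₂) ≤ √(d/6)`, and the lower
bound equals `S(C⁺,C⁺)`. -/
theorem stmt6 (d : ℕ)
    (C1 C2 : Measure (Fin d → ℝ)) (h1 : IsCopula d C1) (h2 : IsCopula d C2) :
    (Real.sqrt d / 3 ≤ S d C1 C2 ∧ S d C1 C2 ≤ Real.sqrt ((d : ℝ) / 6)) ∧
      S d (CPlus d) (CPlus d) = Real.sqrt d / 3 := by
  haveI := h1.1; haveI := h2.1
  set μ := C1.prod C2 with hμ
  -- a.e. both coordinates lie in the box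
  have hbox : MeasurableSet {x : Fin d → ℝ | ∀ i, x i ∈ Icc (0:ℝ) 1} := by
    have : {x : Fin d → ℝ | ∀ i, x i ∈ Icc (0:ℝ) 1}
        = Set.pi univ (fun _ : Fin d => Icc (0:ℝ) 1) := by
      ext x; simp only [Set.mem_univ_pi, Set.mem_setOf_eq]
    rw [this]
    exact MeasurableSet.univ_pi fun _ => measurableSet_Icc
  have hae1 : ∀ᵐ z ∂μ, ∀ i, z.1 i ∈ Icc (0:ℝ) 1 := by
    have hfst : μ.map Prod.fst = C1 := by rw [hμ, Measure.map_fst_prod]; simp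
    have h := copula_ae_box h1
    rw [← hfst] at h
    exact (ae_map_iff measurable_fst.aemeasurable hbox).1 h
  have hae2 : ∀ᵐ z ∂μ, ∀ i, z.2 i ∈ Icc (0:ℝ) 1 := by
    have hsnd : μ.map Prod.snd = C2 := by rw [hμ, Measure.map_snd_prod]; simp
    have h := copula_ae_box h2
    rw [← hsnd] at h
    exact (ae_map_iff measurable_snd.aemeasurable hbox).1 h
  have hae := hae1.and hae2
  -- integrability facts
  have habs_bd : ∀ᵐ z ∂μ, ∀ i : Fin d, |z.1 i - z.2 i| ≤ 1 := by
    filter_upwards [hae] with z hz i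
    have h1 := hz.1 i; have h2 := hz.2 i
    rw [abs_le]
    constructor <;> [linarith [h1.1, h2.2]; linarith [h1.2, h2.1]]
  have hQ_bd : ∀ᵐ z ∂μ, (∑ i, (z.1 i - z.2 i) ^ 2) ≤ (d:ℝ) := by
    filter_upwards [habs_bd] with z hz
    calc (∑ i, (z.1 i - z.2 i) ^ 2) ≤ ∑ _i : Fin d, (1:ℝ) := by
          apply Finset.sum_le_sum
          intro i _
          have := hz i
          nlinarith [abs_nonneg (z.1 i - z.2 i), sq_abs (z.1 i - z.2 i)]
      _ = d := by simp
  have hQmeas : Continuous (fun z : (Fin d → ℝ) × (Fin d → ℝ) =>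
      ∑ i, (z.1 i - z.2 i) ^ 2) := by fun_prop
  have hQint : Integrable (fun z : (Fin d → ℝ) × (Fin d → ℝ) =>
      ∑ i, (z.1 i - z.2 i) ^ 2) μ := by
    apply Integrable.mono' (integrable_const (d : ℝ)) hQmeas.aestronglyMeasurable
    filter_upwards [hQ_bd] with z hz
    rw [Real.norm_eq_abs, abs_of_nonneg (by positivity)]
    exact hz
  have hfint : Integrable (fun z : (Fin d → ℝ) × (Fin d → ℝ) => dist2 z.1 z.2) μ := by
    apply Integrable.mono' (integrable_const (Real.sqrt d)) continuous_dist2.aestronglyMeasurable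
    filter_upwards [hQ_bd] with z hz
    rw [Real.norm_eq_abs, abs_of_nonneg (show (0:ℝ) ≤ dist2 z.1 z.2 from Real.sqrt_nonneg _)]
    exact Real.sqrt_le_sqrt hz
  have habsint : ∀ i : Fin d, Integrable (fun z : (Fin d → ℝ) × (Fin d → ℝ) =>
      |z.1 i - z.2 i|) μ := by
    intro i
    apply Integrable.mono' (integrable_const (1:ℝ))
      (by fun_prop : Continuous fun z : (Fin d → ℝ) × (Fin d → ℝ) =>
        |z.1 i - z.2 i|).aestronglyMeasurable
    filter_upwards [habs_bd] with z hz
    rw [Real.norm_eq_abs, abs_abs]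
    exact hz i
  -- S as an integral over the product measure
  have hS : S d C1 C2 = ∫ z, dist2 z.1 z.2 ∂μ :=
    (MeasureTheory.integral_prod _ hfint).symm
  -- the marginal computations
  have hA : ∀ i : Fin d, ∫ z, |z.1 i - z.2 i| ∂μ = 1 / 3 := fun i => by
    have := marg_integral h1 h2 i (fun p => |p.1 - p.2|) (by fun_prop)
    simp only at this
    rw [this, abs_int]
  have hB : ∀ i : Fin d, ∫ z, (z.1 i - z.2 i) ^ 2 ∂μ = 1 / 6 := fun i => by
    have := marg_integral h1 h2 i (fun p => (p.1 - p.2) ^ 2) (by fun_prop)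
    simp only at this
    rw [this, sq_int]
  -- lower bound
  have hlow : Real.sqrt d / 3 ≤ S d C1 C2 := by
    have hpoint : ∀ z : (Fin d → ℝ) × (Fin d → ℝ),
        (∑ i, |z.1 i - z.2 i|) ≤ Real.sqrt d * dist2 z.1 z.2 := by
      intro z
      have hcs : (∑ i, |z.1 i - z.2 i|) ^ 2 ≤ d * ∑ i, (z.1 i - z.2 i) ^ 2 := by
        have := sq_sum_le_card_mul_sum_sq (s := Finset.univ)
          (f := fun i : Fin d => |z.1 i - z.2 i|)
        simpa [sq_abs] using this
      have h1 : (0:ℝ) ≤ ∑ i, |z.1 i - z.2 i| :=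
        Finset.sum_nonneg fun i _ => abs_nonneg _
      calc (∑ i, |z.1 i - z.2 i|) = Real.sqrt ((∑ i, |z.1 i - z.2 i|) ^ 2) :=
            (Real.sqrt_sq h1).symm
        _ ≤ Real.sqrt (d * ∑ i, (z.1 i - z.2 i) ^ 2) := Real.sqrt_le_sqrt hcs
        _ = Real.sqrt d * dist2 z.1 z.2 := by
            rw [Real.sqrt_mul (Nat.cast_nonneg d)]; rfl
    have hint : ∫ z, (∑ i, |z.1 i - z.2 i|) ∂μ ≤ ∫ z, Real.sqrt d * dist2 z.1 z.2 ∂μ := by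
      apply integral_mono (integrable_finset_sum _ fun i _ => habsint i)
        (hfint.const_mul _) hpoint
    rw [integral_finset_sum _ fun i _ => habsint i, integral_const_mul] at hint
    simp only [hA, Finset.sum_const, Finset.card_univ, Fintype.card_fin, nsmul_eq_mul] at hint
    rcases Nat.eq_zero_or_pos d with hd | hd
    · subst hd
      simp only [Nat.cast_zero, Real.sqrt_zero, zero_div]
      rw [hS]
      exact integral_nonneg fun z => Real.sqrt_nonneg _
    · have hdpos : (0:ℝ) < Real.sqrt d := Real.sqrt_pos.2 (by positivity)
      have hsq : Real.sqrt d * Real.sqrt d = (d:ℝ) :=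
        Real.mul_self_sqrt (Nat.cast_nonneg d)
      rw [hS]
      nlinarith [hint]
  -- upper bound
  have hup : S d C1 C2 ≤ Real.sqrt ((d : ℝ) / 6) := by
    have hQ0 : (0:ℝ → ℝ×ℝ → ℝ) = 0 := rfl
    have h := jensen_sqrt μ (fun z => ∑ i, (z.1 i - z.2 i) ^ 2) hQint
      (Filter.Eventually.of_forall fun z => Finset.sum_nonneg fun i _ => sq_nonneg _)
      (by exact hfint)
    rw [hS]
    have heq : ∫ z, (∑ i, (z.1 i - z.2 i) ^ 2) ∂μ = (d : ℝ) / 6 := by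
      rw [integral_finset_sum _ fun i _ => by
        have hb : Continuous (fun z : (Fin d → ℝ) × (Fin d → ℝ) =>
            (z.1 i - z.2 i) ^ 2) := by fun_prop
        apply Integrable.mono' (integrable_const (1:ℝ)) hb.aestronglyMeasurable
        filter_upwards [habs_bd] with z hz
        rw [Real.norm_eq_abs, abs_of_nonneg (sq_nonneg _)]
        nlinarith [hz i, abs_nonneg (z.1 i - z.2 i), sq_abs (z.1 i - z.2 i)]]
      simp only [hB, Finset.sum_const, Finset.card_univ, Fintype.card_fin, nsmul_eq_mul]
      ring
    rw [heq] at h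
    exact h
  -- CPlus value
  have hCP : S d (CPlus d) (CPlus d) = Real.sqrt d / 3 := by
    set c : ℝ → (Fin d → ℝ) := fun u _ => u with hc
    have hcm : Measurable c := measurable_pi_lambda _ fun _ => measurable_id
    haveI : IsProbabilityMeasure (CPlus d) := Measure.isProbabilityMeasure_map hcm.aemeasurable
    have hcomp : ∀ p : ℝ × ℝ, dist2 (c p.1) (c p.2) = Real.sqrt d * |p.1 - p.2| := by
      intro p
      unfold dist2
      simp only [hc]
      rw [Finset.sum_const, Finset.card_univ, Fintype.card_fin, nsmul_eq_mul,
        Real.sqrt_mul (Nat.cast_nonneg d), Real.sqrt_sq_eq_abs]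
    have hmapprod : (CPlus d).prod (CPlus d)
        = (uniform01.prod uniform01).map (Prod.map c c) := by
      rw [CPlus, Measure.map_prod_map _ _ hcm hcm]
    have hint2 : Integrable (fun z : (Fin d → ℝ) × (Fin d → ℝ) => dist2 z.1 z.2)
        ((CPlus d).prod (CPlus d)) := by
      rw [hmapprod]
      rw [integrable_map_measure continuous_dist2.aestronglyMeasurable
        (hcm.prodMap hcm).aemeasurable]
      have : ((fun z : (Fin d → ℝ) × (Fin d → ℝ) => dist2 z.1 z.2) ∘ Prod.map c c)
          = fun p : ℝ × ℝ => Real.sqrt d * |p.1 - p.2| := by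
        funext p
        exact hcomp p
      rw [this]
      exact (integrable_uniform_prod (by fun_prop)).const_mul _
    have h0 : S d (CPlus d) (CPlus d)
        = ∫ z, dist2 z.1 z.2 ∂((CPlus d).prod (CPlus d)) :=
      (MeasureTheory.integral_prod _ hint2).symm
    rw [h0, hmapprod,
      integral_map (hcm.prodMap hcm).aemeasurable continuous_dist2.aestronglyMeasurable]
    have : ∫ p : ℝ × ℝ, dist2 ((Prod.map c c p).1) ((Prod.map c c p).2)
        ∂(uniform01.prod uniform01)
        = ∫ p : ℝ × ℝ, Real.sqrt d * |p.1 - p.2| ∂(uniform01.prod uniform01) := by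
      apply integral_congr_ae
      filter_upwards with p
      exact hcomp p
    rw [this, integral_const_mul, abs_int]
    ring
  exact ⟨⟨hlow, hup⟩, hCP⟩
end

section
/- Let β ∈ [1,2) and let C be a copula on [0,1]^d. Then the function y ↦ ES_β(C,y) on [0,1]^d attains its maximum over [0,1]^d at a vertex of the cube: there exists y* ∈ {0,1}^d such that ES_β(C,y) ≤ ES_β(C,y*) for all y ∈ [0,1]^d. -/
open MeasureTheory Set

/-- `S_β(C,y) = ∫ ‖x-y‖₂^β C(dx)` for an observation `y`. -/
noncomputable def SbY (d : ℕ) (β : ℝ) (C : Measure (Fin d → ℝ)) (y : Fin d → ℝ) : ℝ :=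
  ∫ x, dist2 x y ^ β ∂C

/-- `S_β(C,C) = ∫∫ ‖x-x'‖₂^β C(dx) C(dx')`. -/
noncomputable def Sb (d : ℕ) (β : ℝ) (F G : Measure (Fin d → ℝ)) : ℝ :=
  ∫ x, ∫ y, dist2 x y ^ β ∂G ∂F

/-- The generalized energy score `ES_β(C,y) = S_β(C,y) - (1/2)·S_β(C,C)`. -/
noncomputable def ES (d : ℕ) (β : ℝ) (C : Measure (Fin d → ℝ)) (y : Fin d → ℝ) : ℝ :=
  SbY d β C y - (1 / 2) * Sb d β C C

lemma dist2_eq_dist {d : ℕ} (x y : Fin d → ℝ) :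
    dist2 x y = dist ((WithLp.equiv 2 (Fin d → ℝ)).symm x) ((WithLp.equiv 2 (Fin d → ℝ)).symm y) := by
  rw [EuclideanSpace.dist_eq, dist2]
  congr 1
  refine Finset.sum_congr rfl fun i _ => ?_
  rw [WithLp.equiv_symm_apply, WithLp.ofLp_toLp, WithLp.ofLp_toLp, Real.dist_eq, sq_abs]

lemma dist2_nonneg {d : ℕ} (x y : Fin d → ℝ) : 0 ≤ dist2 x y := Real.sqrt_nonneg _

lemma dist2_tri {d : ℕ} (x y z : Fin d → ℝ) {a b : ℝ} (ha : 0 ≤ a) (hb : 0 ≤ b)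
    (hab : a + b = 1) : dist2 x (a • y + b • z) ≤ a * dist2 x y + b * dist2 x z := by
  have h := (convexOn_dist ((WithLp.equiv 2 (Fin d → ℝ)).symm x)
    (convex_univ (𝕜 := ℝ))).2 (mem_univ ((WithLp.equiv 2 (Fin d → ℝ)).symm y))
    (mem_univ ((WithLp.equiv 2 (Fin d → ℝ)).symm z)) ha hb hab
  rw [dist2_eq_dist, dist2_eq_dist, dist2_eq_dist, dist_comm, dist_comm _ ((WithLp.equiv 2 (Fin d → ℝ)).symm y),
    dist_comm _ ((WithLp.equiv 2 (Fin d → ℝ)).symm z)]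
  exact h

lemma rpow_comb {β : ℝ} (hβ1 : 1 ≤ β) {u v a b : ℝ} (hu : 0 ≤ u) (hv : 0 ≤ v)
    (ha : 0 ≤ a) (hb : 0 ≤ b) (hab : a + b = 1) :
    (a * u + b * v) ^ β ≤ a * u ^ β + b * v ^ β := by
  have h := (convexOn_rpow hβ1).2 (mem_Ici.2 hu) (mem_Ici.2 hv) ha hb hab
  simpa [smul_eq_mul] using h

lemma convex_g {d : ℕ} {β : ℝ} (hβ1 : 1 ≤ β) (x : Fin d → ℝ) :
    ConvexOn ℝ univ (fun y => dist2 x y ^ β) := by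
  refine ⟨convex_univ, fun y _ z _ a b ha hb hab => ?_⟩
  have h1 : dist2 x (a • y + b • z) ^ β ≤ (a * dist2 x y + b * dist2 x z) ^ β :=
    Real.rpow_le_rpow (dist2_nonneg _ _) (dist2_tri x y z ha hb hab) (by linarith)
  have h2 := rpow_comb hβ1 (dist2_nonneg x y) (dist2_nonneg x z) ha hb hab
  simpa [smul_eq_mul] using h1.trans h2

lemma meas_g {d : ℕ} {β : ℝ} (hβ : 0 ≤ β) (y : Fin d → ℝ) :
    Measurable (fun x : Fin d → ℝ => dist2 x y ^ β) := by
  have hc : Continuous fun x : Fin d → ℝ => dist2 x y := by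
    unfold dist2
    exact (continuous_finset_sum _ fun i _ =>
      ((continuous_apply i).sub continuous_const).pow 2).sqrt
  exact ((Real.continuous_rpow_const hβ).comp hc).measurable

lemma ae_cube {d : ℕ} {C : Measure (Fin d → ℝ)} (hC : IsCopula d C) :
    ∀ᵐ x ∂C, ∀ i, x i ∈ Set.Icc (0:ℝ) 1 := by
  rw [ae_all_iff]
  intro i
  have hmap := hC.2 i
  have hmeas : MeasurableSet ((Set.Icc (0:ℝ) 1)ᶜ) := measurableSet_Icc.compl
  have h0 : uniform01 (Set.Icc (0:ℝ) 1)ᶜ = 0 := by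
    rw [uniform01, Measure.restrict_apply hmeas]
    simp
  rw [ae_iff]
  have hset : {x : Fin d → ℝ | ¬ x i ∈ Set.Icc (0:ℝ) 1}
      = (fun x : Fin d → ℝ => x i) ⁻¹' (Set.Icc (0:ℝ) 1)ᶜ := rfl
  rw [hset, ← Measure.map_apply (measurable_pi_apply i) hmeas, hmap, h0]

lemma dist2_le {d : ℕ} {x y : Fin d → ℝ} (hx : ∀ i, x i ∈ Set.Icc (0:ℝ) 1)
    (hy : ∀ i, y i ∈ Set.Icc (0:ℝ) 1) : dist2 x y ≤ Real.sqrt d := by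
  rw [dist2]
  apply Real.sqrt_le_sqrt
  calc ∑ i, (x i - y i) ^ 2 ≤ ∑ _i : Fin d, (1:ℝ) := by
        refine Finset.sum_le_sum fun i _ => ?_
        have h1 := (hx i).1; have h2 := (hx i).2
        have h3 := (hy i).1; have h4 := (hy i).2
        nlinarith [sq_nonneg (x i - y i)]
    _ = d := by simp

lemma integrable_g {d : ℕ} {β : ℝ} (hβ1 : 1 ≤ β) {C : Measure (Fin d → ℝ)}
    (hC : IsCopula d C) {y : Fin d → ℝ} (hy : ∀ i, y i ∈ Set.Icc (0:ℝ) 1) :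
    Integrable (fun x => dist2 x y ^ β) C := by
  haveI := hC.1
  refine Integrable.mono' (integrable_const ((Real.sqrt d) ^ β))
    (meas_g (by linarith : (0:ℝ) ≤ β) y).aestronglyMeasurable ?_
  filter_upwards [ae_cube hC] with x hx
  rw [Real.norm_eq_abs, abs_of_nonneg (Real.rpow_nonneg (dist2_nonneg x y) β)]
  exact Real.rpow_le_rpow (dist2_nonneg x y) (dist2_le hx hy) (by linarith)

lemma convexOn_SbY {d : ℕ} {β : ℝ} (hβ1 : 1 ≤ β) {C : Measure (Fin d → ℝ)}
    (hC : IsCopula d C) :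
    ConvexOn ℝ (Set.univ.pi fun _ : Fin d => Set.Icc (0:ℝ) 1) (SbY d β C) := by
  refine ⟨convex_pi fun i _ => convex_Icc 0 1, fun y hy z hz a b ha hb hab => ?_⟩
  have hy' : ∀ i, y i ∈ Set.Icc (0:ℝ) 1 := fun i => hy i (mem_univ i)
  have hz' : ∀ i, z i ∈ Set.Icc (0:ℝ) 1 := fun i => hz i (mem_univ i)
  have hiy := integrable_g hβ1 hC hy'
  have hiz := integrable_g hβ1 hC hz'
  have hint : Integrable (fun x => a * dist2 x y ^ β + b * dist2 x z ^ β) C :=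
    (hiy.const_mul a).add (hiz.const_mul b)
  have hayz : ∀ i, (a • y + b • z) i ∈ Set.Icc (0:ℝ) 1 := by
    intro i
    have := (convex_Icc (0:ℝ) 1) (hy' i) (hz' i) ha hb hab
    simpa using this
  have h1 : SbY d β C (a • y + b • z) ≤ ∫ x, (a * dist2 x y ^ β + b * dist2 x z ^ β) ∂C := by
    refine integral_mono (integrable_g hβ1 hC hayz) hint fun x => ?_
    have h1 : dist2 x (a • y + b • z) ^ β ≤ (a * dist2 x y + b * dist2 x z) ^ β :=
      Real.rpow_le_rpow (dist2_nonneg _ _) (dist2_tri x y z ha hb hab) (by linarith)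
    exact h1.trans (rpow_comb hβ1 (dist2_nonneg x y) (dist2_nonneg x z) ha hb hab)
  rw [integral_add (hiy.const_mul a) (hiz.const_mul b), integral_const_mul,
    integral_const_mul] at h1
  simpa [SbY, smul_eq_mul] using h1

/-- for `β ∈ [1,2)` and a copula `C`, the map `y ↦ ES_β(C,y)` attains its
maximum over `[0,1]^d` at a vertex of the cube. -/
theorem stmt18 (d : ℕ) (β : ℝ) (hβ1 : 1 ≤ β) (hβ2 : β < 2)
    (C : Measure (Fin d → ℝ)) (hC : IsCopula d C) :
    ∃ ystar : Fin d → ℝ, (∀ i, ystar i = 0 ∨ ystar i = 1) ∧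
      ∀ y : Fin d → ℝ, (∀ i, y i ∈ Set.Icc (0 : ℝ) 1) → ES d β C y ≤ ES d β C ystar := by
  classical
  set VF : Finset (Fin d → ℝ) :=
    Finset.image (fun b : Fin d → Bool => fun i => if b i then (1:ℝ) else 0) Finset.univ with hVF
  have hne : VF.Nonempty := ⟨_, Finset.mem_image_of_mem _ (Finset.mem_univ (fun _ => true))⟩
  obtain ⟨ystar, hystar, hmax⟩ := VF.exists_max_image (SbY d β C) hne
  have hvert : ∀ v ∈ VF, ∀ i, v i = 0 ∨ v i = 1 := by
    intro v hv i
    obtain ⟨b, _, rfl⟩ := Finset.mem_image.1 hv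
    by_cases h : b i <;> simp [h]
  refine ⟨ystar, hvert ystar hystar, fun y hy => ?_⟩
  -- cube is convex hull of vertices
  have hsub : (Set.univ.pi fun _ : Fin d => ({0, 1} : Set ℝ)) ⊆ (VF : Set (Fin d → ℝ)) := by
    intro v hv
    refine Finset.mem_coe.2 (Finset.mem_image.2 ⟨fun i => decide (v i = 1), Finset.mem_univ _, ?_⟩)
    funext i
    rcases hv i (mem_univ i) with h | h
    · simp [h]
    · rw [mem_singleton_iff] at h; simp [h]
  have hcube : y ∈ convexHull ℝ (VF : Set (Fin d → ℝ)) := by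
    apply convexHull_mono hsub
    rw [convexHull_pi]
    intro i _
    rw [convexHull_pair, segment_eq_Icc (by norm_num : (0:ℝ) ≤ 1)]
    exact hy i
  have hVFcube : (VF : Set (Fin d → ℝ)) ⊆ Set.univ.pi fun _ : Fin d => Set.Icc (0:ℝ) 1 := by
    intro v hv i _
    rcases hvert v hv i with h | h <;> simp [h]
  obtain ⟨v, hv, hyv⟩ := (convexOn_SbY hβ1 hC).exists_ge_of_mem_convexHull hVFcube hcube
  have : SbY d β C y ≤ SbY d β C ystar := hyv.trans (hmax v hv)
  simpa [ES] using this
end
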